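/- Let m_P, m_Q ∈ ℝ with m_P ≠ m_Q and σ_P, σ_Q ≥ 0. Set a := m_P − m_Q, b := σ_Q² − σ_P², v := (1/(2|a|))√(b² + 2a²(σ_P² + σ_Q²) + a⁴), r := 1/2 + (b + a²)/(4av), s := 1/2 + (b − a²)/(4av), and define g(x) := (1+x)/(1+√x)² for x ≥ 0, l := a²/(2(a² + 2(σ_P² + σ_Q²))), β_max := 2·max(g(s/r), g((1−s)/(1−r))), β_min := 2·min(g(s/r), g((1−s)/(1−r))). Then β_min · l ≤ h²(r,s) ≤ β_max · l, where h²(r,s) := (1/2)((√r − √s)² + (√(1−r) − √(1−s))²). -/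

import Mathlib

open Real

/-- The binary squared Hellinger distance
`h²(r,s) = (1/2)((√r − √s)² + (√(1−r) − √(1−s))²)`. -/
noncomputable def binaryH (r s : ℝ) : ℝ :=
  (1 / 2) * ((Real.sqrt r - Real.sqrt s) ^ 2 +
    (Real.sqrt (1 - r) - Real.sqrt (1 - s)) ^ 2)

/-- `g(x) = (1 + x)/(1 + √x)²`. -/
noncomputable def gFun (x : ℝ) : ℝ := (1 + x) / (1 + Real.sqrt x) ^ 2

/-!
Since `(√r - √s)² = g(s/r) · (r - s)² / (r + s)`, the squared Hellinger distance of two Bernoulli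
laws is a combination, with weights `g(s/r) / 2` and `g((1-s)/(1-r)) / 2`, of the two terms of
their triangular discrimination `Δ(r,s) = (r-s)²/(r+s) + (r-s)²/(2-r-s)`; so it lies between the
smaller and the larger weight times `Δ(r,s)`. For the given `r` and `s`, with `w = 4av`, one has
`w² = 4(b² + 2a²(σ_P² + σ_Q²) + a⁴)`, `r - s = 2a²/w` and `r + s = 1 + 2b/w`, and `Δ(r,s)`
collapses to `4l`.
-/

lemma gFun_div {r : ℝ} (s : ℝ) (hr : 0 < r) :
    gFun (s / r) = (r + s) / (√r + √s) ^ 2 := by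
  have hsr : 0 < √r := Real.sqrt_pos.mpr hr
  rw [gFun, Real.sqrt_div' s hr.le]
  field_simp
  rw [Real.sq_sqrt hr.le, mul_comm]

lemma sq_sqrt_sub_sqrt_eq_gFun_mul {r s : ℝ} (hr : 0 ≤ r) (hs : 0 ≤ s) :
    (√r - √s) ^ 2 = gFun (s / r) * ((r - s) ^ 2 / (r + s)) := by
  rcases hr.eq_or_lt with rfl | hr
  · rcases hs.eq_or_lt with rfl | hs
    · simp
    · simp [gFun, pow_two, Real.mul_self_sqrt hs.le, hs.ne']
  · have hsum : 0 < √r + √s := by positivity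
    rw [gFun_div s hr]
    have : r - s = (√r + √s) * (√r - √s) := by
      rw [← sq_sub_sq, Real.sq_sqrt hr.le, Real.sq_sqrt hs]
    rw [this]
    field_simp

noncomputable def binaryTriangular (r s : ℝ) : ℝ :=
  (r - s) ^ 2 / (r + s) + ((1 - r) - (1 - s)) ^ 2 / ((1 - r) + (1 - s))

lemma min_mul_add_le_mul_add_mul {p q x y : ℝ} (hx : 0 ≤ x) (hy : 0 ≤ y) :
    min p q * (x + y) ≤ p * x + q * y := by
  nlinarith [mul_le_mul_of_nonneg_right (min_le_left p q) hx,
    mul_le_mul_of_nonneg_right (min_le_right p q) hy]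

lemma mul_add_mul_le_max_mul_add {p q x y : ℝ} (hx : 0 ≤ x) (hy : 0 ≤ y) :
    p * x + q * y ≤ max p q * (x + y) := by
  nlinarith [mul_le_mul_of_nonneg_right (le_max_left p q) hx,
    mul_le_mul_of_nonneg_right (le_max_right p q) hy]

theorem binaryH_mem_Icc_binaryTriangular {r s : ℝ} (hr : r ∈ Set.Icc (0 : ℝ) 1)
    (hs : s ∈ Set.Icc (0 : ℝ) 1) :
    binaryH r s ∈ Set.Icc
      (min (gFun (s / r)) (gFun ((1 - s) / (1 - r))) * binaryTriangular r s / 2)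
      (max (gFun (s / r)) (gFun ((1 - s) / (1 - r))) * binaryTriangular r s / 2) := by
  obtain ⟨hr0, hr1⟩ := hr
  obtain ⟨hs0, hs1⟩ := hs
  have hx : 0 ≤ (r - s) ^ 2 / (r + s) := by positivity
  have hy : 0 ≤ ((1 - r) - (1 - s)) ^ 2 / ((1 - r) + (1 - s)) :=
    div_nonneg (sq_nonneg _) (by linarith)
  have hH : binaryH r s = (gFun (s / r) * ((r - s) ^ 2 / (r + s)) +
      gFun ((1 - s) / (1 - r)) * (((1 - r) - (1 - s)) ^ 2 / ((1 - r) + (1 - s)))) / 2 := by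
    rw [binaryH, sq_sqrt_sub_sqrt_eq_gFun_mul hr0 hs0,
      sq_sqrt_sub_sqrt_eq_gFun_mul (sub_nonneg.mpr hr1) (sub_nonneg.mpr hs1)]
    ring
  rw [hH, binaryTriangular]
  constructor
  · linarith [min_mul_add_le_mul_add_mul (p := gFun (s / r)) (q := gFun ((1 - s) / (1 - r))) hx hy]
  · linarith [mul_add_mul_le_max_mul_add (p := gFun (s / r)) (q := gFun ((1 - s) / (1 - r))) hx hy]

lemma half_add_div_mem_Icc {x w : ℝ} (h : (2 * x) ^ 2 ≤ w ^ 2) :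
    1 / 2 + x / w ∈ Set.Icc (0 : ℝ) 1 := by
  have : |x / w| ≤ 1 / 2 := by
    rcases eq_or_ne w 0 with rfl | hw
    · simp
    rw [abs_div, div_le_iff₀ (abs_pos.mpr hw)]
    nlinarith [sq_abs x, sq_abs w, abs_nonneg x, abs_nonneg w]
  constructor <;> linarith [abs_le.mp this]

lemma binaryTriangular_half_add_div {c d w : ℝ} (h : (c + d) ^ 2 < w ^ 2) :
    binaryTriangular (1 / 2 + c / w) (1 / 2 + d / w) =
      2 * (c - d) ^ 2 / (w ^ 2 - (c + d) ^ 2) := by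
  have hw : w ≠ 0 := by rintro rfl; nlinarith [sq_nonneg (c + d)]
  have h1 : w + (c + d) ≠ 0 := by
    intro h0; rw [show w = -(c + d) by linarith, neg_sq] at h; exact h.false
  have h2 : w - (c + d) ≠ 0 := by
    intro h0; rw [show w = c + d by linarith] at h; exact h.false
  have hw2 : w ^ 2 - (c + d) ^ 2 ≠ 0 := by nlinarith
  rw [binaryTriangular]
  field_simp
  rw [show w + 2 * c + (w + 2 * d) = 2 * (w + (c + d)) by ring,
    show 2 * w - (w + 2 * c) + (2 * w - (w + 2 * d)) = 2 * (w - (c + d)) by ring]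
  field_simp
  ring

theorem binaryH_compare_bounds_general
    (mP mQ σP σQ : ℝ) (hne : mP ≠ mQ)
    (a b v r s l βmin βmax : ℝ)
    (ha : a = mP - mQ) (hb : b = σQ ^ 2 - σP ^ 2)
    (hv : v = (1 / (2 * |a|)) *
      Real.sqrt (b ^ 2 + 2 * a ^ 2 * (σP ^ 2 + σQ ^ 2) + a ^ 4))
    (hr : r = 1 / 2 + (b + a ^ 2) / (4 * a * v))
    (hs : s = 1 / 2 + (b - a ^ 2) / (4 * a * v))
    (hl : l = a ^ 2 / (2 * (a ^ 2 + 2 * (σP ^ 2 + σQ ^ 2))))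
    (hβmax : βmax = 2 * max (gFun (s / r)) (gFun ((1 - s) / (1 - r))))
    (hβmin : βmin = 2 * min (gFun (s / r)) (gFun ((1 - s) / (1 - r)))) :
    βmin * l ≤ binaryH r s ∧ binaryH r s ≤ βmax * l := by
  have ha0 : a ≠ 0 := by rw [ha]; exact sub_ne_zero.mpr hne
  have ha2 : 0 < a ^ 2 := by positivity
  have hw : (4 * a * v) ^ 2 = 4 * (b ^ 2 + 2 * a ^ 2 * (σP ^ 2 + σQ ^ 2) + a ^ 4) := by
    have hD : 0 ≤ b ^ 2 + 2 * a ^ 2 * (σP ^ 2 + σQ ^ 2) + a ^ 4 := by positivity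
    simp only [hv, mul_pow, div_pow, sq_abs, Real.sq_sqrt hD]
    field_simp
    norm_num
  -- `4(b² + 2a²(σ_P² + σ_Q²) + a⁴) - (2(b ± a²))²` is `16a²σ_P²` resp. `16a²σ_Q²`
  have hr01 : r ∈ Set.Icc (0 : ℝ) 1 := hr ▸ half_add_div_mem_Icc (by rw [hw, hb]; nlinarith)
  have hs01 : s ∈ Set.Icc (0 : ℝ) 1 := hs ▸ half_add_div_mem_Icc (by rw [hw, hb]; nlinarith)
  have hΔ : binaryTriangular r s = 4 * l := by
    rw [hr, hs, binaryTriangular_half_add_div (by rw [hw]; nlinarith), hw, hl,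
      show 4 * (b ^ 2 + 2 * a ^ 2 * (σP ^ 2 + σQ ^ 2) + a ^ 4) - (b + a ^ 2 + (b - a ^ 2)) ^ 2 =
        4 * a ^ 2 * (a ^ 2 + 2 * (σP ^ 2 + σQ ^ 2)) by ring]
    field_simp
    ring
  obtain ⟨hlower, hupper⟩ := binaryH_mem_Icc_binaryTriangular hr01 hs01
  rw [hΔ] at hlower hupper
  rw [hβmin, hβmax]
  constructor <;> linarith

theorem binaryH_compare_bounds
    (mP mQ σP σQ : ℝ) (hne : mP ≠ mQ) (hσP : 0 ≤ σP) (hσQ : 0 ≤ σQ)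
    (a b v r s l βmin βmax : ℝ)
    (ha : a = mP - mQ) (hb : b = σQ ^ 2 - σP ^ 2)
    (hv : v = (1 / (2 * |a|)) *
      Real.sqrt (b ^ 2 + 2 * a ^ 2 * (σP ^ 2 + σQ ^ 2) + a ^ 4))
    (hr : r = 1 / 2 + (b + a ^ 2) / (4 * a * v))
    (hs : s = 1 / 2 + (b - a ^ 2) / (4 * a * v))
    (hl : l = a ^ 2 / (2 * (a ^ 2 + 2 * (σP ^ 2 + σQ ^ 2))))
    (hβmax : βmax = 2 * max (gFun (s / r)) (gFun ((1 - s) / (1 - r))))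
    (hβmin : βmin = 2 * min (gFun (s / r)) (gFun ((1 - s) / (1 - r)))) :
    βmin * l ≤ binaryH r s ∧ binaryH r s ≤ βmax * l :=
  binaryH_compare_bounds_general mP mQ σP σQ hne a b v r s l βmin βmax ha hb hv hr hs hl hβmax hβmin
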